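/- For any permutation π ∈ S_n, the orbit of π under the Foata–Strehl action satisfies Σ_{σ ∈ Orb(π)} x^{des(σ)} = x^{peak(π)} (1+x)^{n-1-2·peak(π)}. -/

import Mathlib

/-- The letters of the word `w` with the boundary convention `a₀ = a_{n+1} = n+1`:
`ext n w i` is `aᵢ` for `1 ≤ i ≤ n` and `n+1` for `i = 0` and `i = n+1`. -/
def ext (n : ℕ) (w : List ℕ) (i : ℕ) : ℕ := (((n + 1) :: w) ++ [n + 1]).getD i 0

/-- The number of descents of the word `w`: indices `i ∈ [n]` with `aᵢ > a_{i+1}`. -/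
def des (n : ℕ) (w : List ℕ) : ℕ :=
  ((Finset.Icc 1 n).filter (fun i => ext n w (i + 1) < ext n w i)).card

/-- The number of peaks of the word `w`: indices `i ∈ [n]` with `a_{i-1} < aᵢ > a_{i+1}`. -/
def peak (n : ℕ) (w : List ℕ) : ℕ :=
  ((Finset.Icc 1 n).filter
    (fun i => ext n w (i - 1) < ext n w i ∧ ext n w (i + 1) < ext n w i)).card

/-- The Foata–Strehl (valley-hopping) involution `φₓ`.  If `x` is a double descent it is
moved to the slot between the first pair `aᵢ < x < a_{i+1}` to its right; if `x` is a
double ascent it is moved to the slot between the first pair `aᵢ > x > a_{i+1}` to its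
left; peaks and valleys are fixed. -/
def phi (n x : ℕ) (w : List ℕ) : List ℕ :=
  let l := w.takeWhile (· ≠ x)
  let r := (w.dropWhile (· ≠ x)).tail
  let prev := l.getLastD (n + 1)
  let next := r.headD (n + 1)
  if x < prev ∧ next < x then
    l ++ r.takeWhile (· < x) ++ x :: r.dropWhile (· < x)
  else if prev < x ∧ x < next then
    (l.reverse.dropWhile (· < x)).reverse ++ x :: ((l.reverse.takeWhile (· < x)).reverse ++ r)
  else w

/-- The orbit of the word `w` under the `ℤ₂ⁿ`-action generated by the commuting
involutions `φₓ`, `x ∈ [n]`. -/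
def Orb (n : ℕ) (w : List ℕ) : Set (List ℕ) :=
  {σ | ∃ l : List ℕ, (∀ x ∈ l, x ∈ Finset.Icc 1 n) ∧ σ = l.foldr (phi n) w}


/-!
Record at each letter `y` whether its left and its right neighbour (with the boundary value
`n + 1`) exceed it: this pair is the `shape` of `y`. The involution `φₓ` exchanges `x` with the
maximal block of smaller letters on one side of it (`IsHop`), so it swaps the shapes of double
descents and double ascents, fixes peaks and valleys, and keeps the shape of every other letter.
Hence the peaks and the free letters (double descents and double ascents) are the same along an
orbit, and `σ ↦ doubleDescents σ` maps the orbit to the subsets of the free letters. The map is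
onto, since free letters can be turned into double descents one at a time, and one-to-one: the
`φ`'s of two double descents commute, so turning all double descents into double ascents gives a
word `canonical σ` that is constant on the orbit and determines `σ` together with its double
descents. Finally `des = #peaks + #doubleDescents`, and the valleys outnumber the peaks by one, so
there are `n - 1 - 2 * #peaks` free letters.
-/

namespace FoataStrehl

section Lists

variable {α : Type*}

lemma getLastD_append (u v : List α) (d : α) :
    (u ++ v).getLastD d = v.getLastD (u.getLastD d) := by
  induction v using List.reverseRecOn with
  | nil => simp
  | append_singleton v a _ => simp [← List.append_assoc]

lemma headD_append (u v : List α) (d : α) : (u ++ v).headD d = u.headD (v.headD d) := by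
  cases u <;> rfl

lemma getLastD_reverse (u : List α) (d : α) : u.reverse.getLastD d = u.headD d := by
  cases u <;> simp

lemma getLastD_congr_of_ne_nil {u : List α} (hu : u ≠ []) (a b : α) :
    u.getLastD a = u.getLastD b := by
  simp [List.getLast?_eq_some_getLast hu]

lemma headD_congr_of_ne_nil {u : List α} (hu : u ≠ []) (a b : α) : u.headD a = u.headD b := by
  cases u with
  | nil => exact absurd rfl hu
  | cons => rfl

lemma getLastD_mem_of_ne_nil {u : List α} (hu : u ≠ []) (d : α) : u.getLastD d ∈ u := by
  simp [List.getLast?_eq_some_getLast hu, List.getLast_mem]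

lemma headD_mem_of_ne_nil {u : List α} (hu : u ≠ []) (d : α) : u.headD d ∈ u := by
  cases u with
  | nil => exact absurd rfl hu
  | cons => simp

lemma iff_getLastD_of_iff (P : α → Prop) (u : List α) {a b : α} (h : u = [] → (P a ↔ P b)) :
    P (u.getLastD a) ↔ P (u.getLastD b) := by
  rcases eq_or_ne u [] with rfl | hu
  · exact h rfl
  · rw [getLastD_congr_of_ne_nil hu a b]

lemma iff_headD_of_iff (P : α → Prop) (u : List α) {a b : α} (h : u = [] → (P a ↔ P b)) :
    P (u.headD a) ↔ P (u.headD b) := by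
  cases u with
  | nil => exact h rfl
  | cons => rfl

lemma exists_append_cons_of_mem {y : α} {σ : List α} (hσ : σ.Nodup) (h : y ∈ σ) :
    ∃ u v, σ = u ++ y :: v ∧ y ∉ u ∧ y ∉ v := by
  obtain ⟨u, v, rfl⟩ := List.append_of_mem h
  have := (List.nodup_cons.mp (List.nodup_middle.mp hσ)).1
  exact ⟨u, v, rfl, fun h => this (by simp [h]), fun h => this (by simp [h])⟩

lemma not_mem_of_nodup_append_cons {y : α} {u v : List α} (h : (u ++ y :: v).Nodup) : y ∉ u :=
  fun hy => (List.nodup_cons.mp (List.nodup_middle.mp h)).1 (List.mem_append_left v hy)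

variable [DecidableEq α]

lemma takeWhile_ne_append_cons {y : α} {u : List α} (hy : y ∉ u) (v : List α) :
    (u ++ y :: v).takeWhile (· ≠ y) = u := by
  rw [List.takeWhile_append_of_pos (by simpa using fun a ha (h : a = y) => hy (h ▸ ha))]
  simp

lemma dropWhile_ne_append_cons {y : α} {u : List α} (hy : y ∉ u) (v : List α) :
    (u ++ y :: v).dropWhile (· ≠ y) = y :: v := by
  rw [List.dropWhile_append_of_pos (by simpa using fun a ha (h : a = y) => hy (h ▸ ha))]
  simp

end Lists

section Blocks

variable {α : Type*} [LinearOrder α]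

lemma exists_lt_prefix (x d : α) (hxd : x < d) {r : List α} (hx : x ∉ r) :
    ∃ v w, r = v ++ w ∧ (∀ a ∈ v, a < x) ∧ x < w.headD d := by
  refine ⟨r.takeWhile (· < x), r.dropWhile (· < x), List.takeWhile_append_dropWhile.symm,
    fun a ha => by simpa using List.mem_takeWhile_imp ha, ?_⟩
  have h := List.head?_dropWhile_not (fun a => decide (a < x)) r
  cases e : r.dropWhile (· < x) with
  | nil => exact hxd
  | cons a t =>
    have ha : a ∈ r := (List.dropWhile_sublist (fun a => decide (a < x))).subset (by simp [e])
    rw [e] at h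
    simp only [List.head?_cons, decide_eq_false_iff_not, not_lt] at h
    exact lt_of_le_of_ne h (fun h' => hx (h' ▸ ha))

lemma exists_lt_suffix (x d : α) (hxd : x < d) {l : List α} (hx : x ∉ l) :
    ∃ u v, l = u ++ v ∧ x < u.getLastD d ∧ (∀ a ∈ v, a < x) := by
  obtain ⟨v, u, hl, hv, hu⟩ := exists_lt_prefix x d hxd (r := l.reverse) (by simpa using hx)
  refine ⟨u.reverse, v.reverse, ?_, by rwa [getLastD_reverse], by simpa using hv⟩
  rw [← List.reverse_append, ← hl, List.reverse_reverse]

lemma takeWhile_lt_eq_nil {x d : α} {w : List α} (hw : x < w.headD d) :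
    w.takeWhile (· < x) = [] := by
  cases w with
  | nil => rfl
  | cons a t => simp [lt_asymm (show x < a from hw)]

lemma dropWhile_lt_eq_self {x d : α} {w : List α} (hw : x < w.headD d) :
    w.dropWhile (· < x) = w := by
  cases w with
  | nil => rfl
  | cons a t => simp [lt_asymm (show x < a from hw)]

end Blocks

def prevLetter (n : ℕ) (σ : List ℕ) (y : ℕ) : ℕ := (σ.takeWhile (· ≠ y)).getLastD (n + 1)

def nextLetter (n : ℕ) (σ : List ℕ) (y : ℕ) : ℕ := (σ.dropWhile (· ≠ y)).tail.headD (n + 1)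

lemma prevLetter_append_cons (n : ℕ) {y : ℕ} {u : List ℕ} (hy : y ∉ u) (v : List ℕ) :
    prevLetter n (u ++ y :: v) y = u.getLastD (n + 1) := by
  rw [prevLetter, takeWhile_ne_append_cons hy]

lemma nextLetter_append_cons (n : ℕ) {y : ℕ} {u : List ℕ} (hy : y ∉ u) (v : List ℕ) :
    nextLetter n (u ++ y :: v) y = v.headD (n + 1) := by
  rw [nextLetter, dropWhile_ne_append_cons hy, List.tail_cons]

/-- Double descents, double ascents, peaks and valleys are the letters of shape `(true, false)`,
`(false, true)`, `(false, false)` and `(true, true)`. -/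
def shape (n : ℕ) (σ : List ℕ) (y : ℕ) : Bool × Bool :=
  (decide (y < prevLetter n σ y), decide (y < nextLetter n σ y))

lemma phi_eq_self {n x : ℕ} {σ : List ℕ} (h : (shape n σ x).1 = (shape n σ x).2) :
    phi n x σ = σ := by
  have h' : x < prevLetter n σ x ↔ x < nextLetter n σ x := by simpa [shape] using h
  unfold phi
  simp only [prevLetter, nextLetter] at h' ⊢
  rw [if_neg (by omega), if_neg (by omega)]

/-- The double descent `x` of `σ` hops over the maximal block `v` of smaller letters to its right
and becomes a double ascent of `τ`. -/
def IsHop (n x : ℕ) (σ τ : List ℕ) : Prop :=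
  ∃ u v w : List ℕ, x ∉ u ∧ x < u.getLastD (n + 1) ∧ v ≠ [] ∧ (∀ a ∈ v, a < x) ∧
    x < w.headD (n + 1) ∧ σ = u ++ x :: (v ++ w) ∧ τ = u ++ v ++ x :: w

lemma phi_hop_right {n x : ℕ} {u v w : List ℕ} (hxu : x ∉ u) (hu : x < u.getLastD (n + 1))
    (hv : ∀ a ∈ v, a < x) (hw : x < w.headD (n + 1)) :
    phi n x (u ++ x :: (v ++ w)) = u ++ v ++ x :: w := by
  unfold phi
  simp only [takeWhile_ne_append_cons hxu, dropWhile_ne_append_cons hxu, List.tail_cons]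
  rcases eq_or_ne v [] with rfl | hv0
  · rw [List.nil_append, if_neg (by omega), if_neg (by omega)]
    simp
  · have hnext : (v ++ w).headD (n + 1) < x := by
      rw [headD_append, headD_congr_of_ne_nil hv0 _ (n + 1)]
      exact hv _ (headD_mem_of_ne_nil hv0 _)
    have hv' : ∀ a ∈ v, decide (a < x) = true := by simpa using hv
    rw [if_pos ⟨hu, hnext⟩, List.takeWhile_append_of_pos hv', List.dropWhile_append_of_pos hv',
      takeWhile_lt_eq_nil hw, dropWhile_lt_eq_self hw, List.append_nil]

lemma phi_hop_left {n x : ℕ} {u v w : List ℕ} (hxu : x ∉ u) (hu : x < u.getLastD (n + 1))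
    (hv : ∀ a ∈ v, a < x) (hw : x < w.headD (n + 1)) :
    phi n x (u ++ v ++ x :: w) = u ++ x :: (v ++ w) := by
  have hxuv : x ∉ u ++ v := by
    simp only [List.mem_append, not_or]
    exact ⟨hxu, fun h => lt_irrefl x (hv x h)⟩
  unfold phi
  simp only [takeWhile_ne_append_cons hxuv, dropWhile_ne_append_cons hxuv, List.tail_cons]
  rcases eq_or_ne v [] with rfl | hv0
  · rw [List.append_nil, if_neg (by omega), if_neg (by omega)]
    simp
  · have hprev : (u ++ v).getLastD (n + 1) < x := by
      rw [getLastD_append, getLastD_congr_of_ne_nil hv0 _ (n + 1)]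
      exact hv _ (getLastD_mem_of_ne_nil hv0 _)
    have hv' : ∀ a ∈ v.reverse, decide (a < x) = true := by simpa using hv
    have hu' : x < u.reverse.headD (n + 1) := by rwa [← getLastD_reverse, List.reverse_reverse]
    rw [if_neg (by omega), if_pos ⟨hprev, hw⟩, List.reverse_append,
      List.takeWhile_append_of_pos hv', List.dropWhile_append_of_pos hv',
      takeWhile_lt_eq_nil hu', dropWhile_lt_eq_self hu']
    simp

lemma shape_append_cons {n y : ℕ} {u v u' v' : List ℕ} (hu : y ∉ u) (hu' : y ∉ u')
    (hl : y < u.getLastD (n + 1) ↔ y < u'.getLastD (n + 1))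
    (hr : y < v.headD (n + 1) ↔ y < v'.headD (n + 1)) :
    shape n (u ++ y :: v) y = shape n (u' ++ y :: v') y := by
  simp only [shape, prevLetter_append_cons n hu, prevLetter_append_cons n hu',
    nextLetter_append_cons n hu, nextLetter_append_cons n hu', Prod.mk.injEq, decide_eq_decide]
  exact ⟨hl, hr⟩

section ShapeHop

variable {n x y : ℕ} {u v w : List ℕ}

lemma nodup_hop (hσ : (u ++ x :: (v ++ w)).Nodup) : (u ++ v ++ x :: w).Nodup := by
  rw [List.append_assoc]
  exact (List.perm_middle.append_left u).nodup_iff.mpr hσ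

lemma shape_hop_of_mem_left (hσ : (u ++ x :: (v ++ w)).Nodup) (hu : x < u.getLastD (n + 1))
    (hv0 : v ≠ []) (hv : ∀ a ∈ v, a < x) (hyu : y ∈ u) :
    shape n (u ++ v ++ x :: w) y = shape n (u ++ x :: (v ++ w)) y := by
  have hτ := nodup_hop hσ
  obtain ⟨a, b, rfl, -, -⟩ := exists_append_cons_of_mem (List.Nodup.of_append_left hσ) hyu
  rw [show a ++ y :: b ++ x :: (v ++ w) = a ++ y :: (b ++ x :: (v ++ w)) by simp] at hσ ⊢
  rw [show a ++ y :: b ++ v ++ x :: w = a ++ y :: (b ++ (v ++ x :: w)) by simp] at hτ ⊢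
  refine shape_append_cons (not_mem_of_nodup_append_cons hτ) (not_mem_of_nodup_append_cons hσ)
    Iff.rfl ?_
  simp only [headD_append]
  refine iff_headD_of_iff _ b fun hb => ?_
  subst hb
  rw [List.getLastD_concat] at hu
  have hv' := hv _ (headD_mem_of_ne_nil hv0 (n + 1))
  simp only [headD_congr_of_ne_nil hv0 _ (n + 1), List.headD_cons]
  omega

lemma shape_hop_of_mem_block (hσ : (u ++ x :: (v ++ w)).Nodup) (hu : x < u.getLastD (n + 1))
    (hv : ∀ a ∈ v, a < x) (hw : x < w.headD (n + 1)) (hyv : y ∈ v) :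
    shape n (u ++ v ++ x :: w) y = shape n (u ++ x :: (v ++ w)) y := by
  have hτ := nodup_hop hσ
  obtain ⟨c, d, rfl, -, -⟩ := exists_append_cons_of_mem
    ((List.nodup_middle.mp hσ).of_cons.of_append_right.of_append_left) hyv
  have hyx := hv y (by simp)
  rw [show u ++ x :: (c ++ y :: d ++ w) = u ++ x :: c ++ y :: (d ++ w) by simp] at hσ ⊢
  rw [show u ++ (c ++ y :: d) ++ x :: w = u ++ c ++ y :: (d ++ x :: w) by simp] at hτ ⊢
  refine shape_append_cons (not_mem_of_nodup_append_cons hτ) (not_mem_of_nodup_append_cons hσ)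
    ?_ ?_
  · rw [getLastD_append, getLastD_append, List.getLastD_cons]
    exact iff_getLastD_of_iff _ c fun _ => by omega
  · simp only [headD_append, List.headD_cons]
    exact iff_headD_of_iff _ d fun _ => by omega

lemma shape_hop_of_mem_right (hσ : (u ++ x :: (v ++ w)).Nodup) (hv0 : v ≠ [])
    (hv : ∀ a ∈ v, a < x) (hw : x < w.headD (n + 1)) (hyw : y ∈ w) :
    shape n (u ++ v ++ x :: w) y = shape n (u ++ x :: (v ++ w)) y := by
  have hτ := nodup_hop hσ
  obtain ⟨a, b, rfl, -, -⟩ := exists_append_cons_of_mem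
    ((List.nodup_middle.mp hσ).of_cons.of_append_right.of_append_right) hyw
  rw [show u ++ x :: (v ++ (a ++ y :: b)) = u ++ [x] ++ v ++ a ++ y :: b by simp] at hσ ⊢
  rw [show u ++ v ++ x :: (a ++ y :: b) = u ++ v ++ [x] ++ a ++ y :: b by simp] at hτ ⊢
  refine shape_append_cons (not_mem_of_nodup_append_cons hτ) (not_mem_of_nodup_append_cons hσ)
    ?_ Iff.rfl
  rw [getLastD_append _ a, getLastD_append _ a, List.getLastD_concat, getLastD_append _ v,
    getLastD_congr_of_ne_nil hv0 _ (n + 1)]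
  refine iff_getLastD_of_iff _ a fun ha => ?_
  subst ha
  have hv' := hv _ (getLastD_mem_of_ne_nil hv0 (n + 1))
  simp only [List.nil_append, List.headD_cons] at hw
  omega

end ShapeHop

namespace IsHop

variable {n x : ℕ} {σ τ : List ℕ}

lemma phi_eq (h : IsHop n x σ τ) : phi n x σ = τ := by
  obtain ⟨u, v, w, hxu, hu, -, hv, hw, rfl, rfl⟩ := h
  exact phi_hop_right hxu hu hv hw

lemma phi_eq_symm (h : IsHop n x σ τ) : phi n x τ = σ := by
  obtain ⟨u, v, w, hxu, hu, -, hv, hw, rfl, rfl⟩ := h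
  exact phi_hop_left hxu hu hv hw

lemma perm (h : IsHop n x σ τ) : τ.Perm σ := by
  obtain ⟨u, v, w, -, -, -, -, -, rfl, rfl⟩ := h
  rw [List.append_assoc]
  exact List.perm_middle.append_left u

lemma shape_left (h : IsHop n x σ τ) : shape n σ x = (true, false) := by
  obtain ⟨u, v, w, hxu, hu, hv0, hv, -, rfl, -⟩ := h
  have hnext : (v ++ w).headD (n + 1) < x := by
    rw [headD_append, headD_congr_of_ne_nil hv0 _ (n + 1)]
    exact hv _ (headD_mem_of_ne_nil hv0 _)
  simp only [shape, prevLetter_append_cons n hxu, nextLetter_append_cons n hxu,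
    decide_eq_true hu, decide_eq_false (Nat.lt_asymm hnext)]

lemma shape_right (h : IsHop n x σ τ) : shape n τ x = (false, true) := by
  obtain ⟨u, v, w, hxu, hu, hv0, hv, hw, -, rfl⟩ := h
  have hxuv : x ∉ u ++ v := by
    simp only [List.mem_append, not_or]
    exact ⟨hxu, fun h => lt_irrefl x (hv x h)⟩
  have hprev : (u ++ v).getLastD (n + 1) < x := by
    rw [getLastD_append, getLastD_congr_of_ne_nil hv0 _ (n + 1)]
    exact hv _ (getLastD_mem_of_ne_nil hv0 _)
  rw [shape, prevLetter_append_cons n hxuv, nextLetter_append_cons n hxuv,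
    decide_eq_true hw, decide_eq_false (Nat.lt_asymm hprev)]

lemma shape_of_ne (h : IsHop n x σ τ) (hσ : σ.Nodup) {y : ℕ} (hy : y ∈ σ) (hyx : y ≠ x) :
    shape n τ y = shape n σ y := by
  obtain ⟨u, v, w, -, hu, hv0, hv, hw, rfl, rfl⟩ := h
  simp only [List.mem_append, List.mem_cons, hyx, false_or] at hy
  rcases hy with hyu | hyv | hyw
  · exact shape_hop_of_mem_left hσ hu hv0 hv hyu
  · exact shape_hop_of_mem_block hσ hu hv hw hyv
  · exact shape_hop_of_mem_right hσ hv0 hv hw hyw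

end IsHop

section Phi

variable {n x : ℕ} {σ : List ℕ}

lemma mem_iff_mem_Icc (hσ : σ.Perm (List.range' 1 n)) {y : ℕ} : y ∈ σ ↔ y ∈ Finset.Icc 1 n := by
  rw [hσ.mem_iff, List.mem_range'_1, Finset.mem_Icc]
  omega

lemma nodup_of_perm_range' (hσ : σ.Perm (List.range' 1 n)) : σ.Nodup :=
  hσ.nodup_iff.mpr List.nodup_range'

lemma isHop_phi (hσ : σ.Perm (List.range' 1 n)) (hx : x ∈ Finset.Icc 1 n)
    (h : shape n σ x = (true, false)) : IsHop n x σ (phi n x σ) := by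
  obtain ⟨u, r, rfl, hxu, hxr⟩ :=
    exists_append_cons_of_mem (nodup_of_perm_range' hσ) ((mem_iff_mem_Icc hσ).mpr hx)
  obtain ⟨v, w, rfl, hv, hw⟩ :=
    exists_lt_prefix x (n + 1) (Nat.lt_succ_of_le (Finset.mem_Icc.mp hx).2) hxr
  simp only [shape, prevLetter_append_cons n hxu, nextLetter_append_cons n hxu, Prod.mk.injEq,
    decide_eq_true_eq, decide_eq_false_iff_not] at h
  have hv0 : v ≠ [] := by
    rintro rfl
    exact h.2 hw
  exact ⟨u, v, w, hxu, h.1, hv0, hv, hw, rfl, phi_hop_right hxu h.1 hv hw⟩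

lemma isHop_phi_symm (hσ : σ.Perm (List.range' 1 n)) (hx : x ∈ Finset.Icc 1 n)
    (h : shape n σ x = (false, true)) : IsHop n x (phi n x σ) σ := by
  obtain ⟨l, w, rfl, hxl, -⟩ :=
    exists_append_cons_of_mem (nodup_of_perm_range' hσ) ((mem_iff_mem_Icc hσ).mpr hx)
  obtain ⟨u, v, rfl, hu, hv⟩ :=
    exists_lt_suffix x (n + 1) (Nat.lt_succ_of_le (Finset.mem_Icc.mp hx).2) hxl
  simp only [shape, prevLetter_append_cons n hxl, nextLetter_append_cons n hxl, Prod.mk.injEq,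
    decide_eq_true_eq, decide_eq_false_iff_not] at h
  have hxu : x ∉ u := fun h => hxl (List.mem_append_left v h)
  have hv0 : v ≠ [] := by
    rintro rfl
    exact h.1 (by simpa using hu)
  exact ⟨u, v, w, hxu, hu, hv0, hv, h.2, phi_hop_left hxu hu hv h.2, rfl⟩

lemma phi_trichotomy (hσ : σ.Perm (List.range' 1 n)) (hx : x ∈ Finset.Icc 1 n) :
    IsHop n x σ (phi n x σ) ∨ IsHop n x (phi n x σ) σ ∨ phi n x σ = σ := by
  rcases h : shape n σ x with ⟨_ | _, _ | _⟩
  · exact .inr <| .inr <| phi_eq_self (by rw [h])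
  · exact .inr <| .inl <| isHop_phi_symm hσ hx h
  · exact .inl <| isHop_phi hσ hx h
  · exact .inr <| .inr <| phi_eq_self (by rw [h])

lemma perm_range'_phi (hσ : σ.Perm (List.range' 1 n)) (hx : x ∈ Finset.Icc 1 n) :
    (phi n x σ).Perm (List.range' 1 n) := by
  rcases phi_trichotomy hσ hx with h | h | h
  · exact h.perm.trans hσ
  · exact h.perm.symm.trans hσ
  · rwa [h]

lemma phi_phi (hσ : σ.Perm (List.range' 1 n)) (hx : x ∈ Finset.Icc 1 n) :
    phi n x (phi n x σ) = σ := by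
  rcases phi_trichotomy hσ hx with h | h | h
  · rw [h.phi_eq, h.phi_eq_symm]
  · exact h.phi_eq
  · rw [h, h]

lemma shape_phi_of_ne (hσ : σ.Perm (List.range' 1 n)) (hx : x ∈ Finset.Icc 1 n) {y : ℕ}
    (hy : y ∈ Finset.Icc 1 n) (hyx : y ≠ x) : shape n (phi n x σ) y = shape n σ y := by
  have hyσ := (mem_iff_mem_Icc hσ).mpr hy
  rcases phi_trichotomy hσ hx with h | h | h
  · exact h.shape_of_ne (nodup_of_perm_range' hσ) hyσ hyx
  · exact (h.shape_of_ne (nodup_of_perm_range' (perm_range'_phi hσ hx))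
      (h.perm.mem_iff.mp hyσ) hyx).symm
  · rw [h]

lemma shape_phi_self (hσ : σ.Perm (List.range' 1 n)) (hx : x ∈ Finset.Icc 1 n) :
    shape n (phi n x σ) x = (shape n σ x).swap ∨ phi n x σ = σ := by
  rcases phi_trichotomy hσ hx with h | h | h
  · exact .inl (by rw [h.shape_left, h.shape_right]; rfl)
  · exact .inl (by rw [h.shape_left, h.shape_right]; rfl)
  · exact .inr h

end Phi

section Letters

variable {n x : ℕ} {σ : List ℕ}

def lettersWithShape (n : ℕ) (σ : List ℕ) (P : Bool × Bool → Prop) [DecidablePred P] :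
    Finset ℕ :=
  (Finset.Icc 1 n).filter fun y => P (shape n σ y)

abbrev peaks (n : ℕ) (σ : List ℕ) : Finset ℕ := lettersWithShape n σ (· = (false, false))

abbrev doubleDescents (n : ℕ) (σ : List ℕ) : Finset ℕ := lettersWithShape n σ (· = (true, false))

abbrev freeLetters (n : ℕ) (σ : List ℕ) : Finset ℕ := lettersWithShape n σ fun t => t.1 ≠ t.2

lemma mem_doubleDescents {y : ℕ} :
    y ∈ doubleDescents n σ ↔ y ∈ Finset.Icc 1 n ∧ shape n σ y = (true, false) :=
  Finset.mem_filter

lemma doubleDescents_subset_freeLetters : doubleDescents n σ ⊆ freeLetters n σ :=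
  Finset.monotone_filter_right _ fun _ _ h => by simp [h]

lemma mem_lettersWithShape_phi_of_ne (hσ : σ.Perm (List.range' 1 n)) (hx : x ∈ Finset.Icc 1 n)
    {P : Bool × Bool → Prop} [DecidablePred P] {y : ℕ} (hyx : y ≠ x) :
    y ∈ lettersWithShape n (phi n x σ) P ↔ y ∈ lettersWithShape n σ P := by
  simp only [lettersWithShape, Finset.mem_filter, and_congr_right_iff]
  intro hy
  rw [shape_phi_of_ne hσ hx hy hyx]

lemma lettersWithShape_phi (hσ : σ.Perm (List.range' 1 n)) (hx : x ∈ Finset.Icc 1 n)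
    {P : Bool × Bool → Prop} [DecidablePred P] (hP : ∀ t, P t.swap ↔ P t) :
    lettersWithShape n (phi n x σ) P = lettersWithShape n σ P := by
  ext y
  rcases eq_or_ne y x with rfl | hyx
  · simp only [lettersWithShape, Finset.mem_filter, hx, true_and]
    rcases shape_phi_self hσ hx with h | h <;> rw [h]
    exact hP _
  · exact mem_lettersWithShape_phi_of_ne hσ hx hyx

lemma doubleDescents_phi (hσ : σ.Perm (List.range' 1 n)) (hx : x ∈ doubleDescents n σ) :
    doubleDescents n (phi n x σ) = (doubleDescents n σ).erase x := by
  obtain ⟨hxI, h⟩ := mem_doubleDescents.mp hx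
  ext y
  rcases eq_or_ne y x with rfl | hyx
  · simp [lettersWithShape, (isHop_phi hσ hxI h).shape_right]
  · rw [Finset.mem_erase, mem_lettersWithShape_phi_of_ne hσ hxI hyx, and_iff_right hyx]

lemma doubleDescents_phi_of_shape_eq (hσ : σ.Perm (List.range' 1 n)) (hx : x ∈ Finset.Icc 1 n)
    (h : shape n σ x = (false, true)) :
    doubleDescents n (phi n x σ) = insert x (doubleDescents n σ) := by
  ext y
  rcases eq_or_ne y x with rfl | hyx
  · simp [lettersWithShape, (isHop_phi_symm hσ hx h).shape_left, hx]
  · rw [Finset.mem_insert, mem_lettersWithShape_phi_of_ne hσ hx hyx, or_iff_right hyx]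

end Letters

section Commute

variable {n x y : ℕ} {l v w : List ℕ}

lemma phi_comm_of_mem_block (hσ : (l ++ x :: (v ++ w)).Nodup) (hxl : x ∉ l)
    (hl : x < l.getLastD (n + 1)) (hv : ∀ a ∈ v, a < x) (hw : x < w.headD (n + 1))
    (hyv : y ∈ v) (hy : shape n (l ++ x :: (v ++ w)) y = (true, false)) :
    phi n x (phi n y (l ++ x :: (v ++ w))) = phi n y (phi n x (l ++ x :: (v ++ w))) := by
  -- with `v = c y d₁ d₂`, where `y` hops over `d₁`, both sides equal `l c d₁ y d₂ x w`
  obtain ⟨c, d, rfl, -, hyd⟩ :=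
    exists_append_cons_of_mem ((List.nodup_middle.mp hσ).of_cons.of_append_right.of_append_left) hyv
  have hyx : y < x := hv y (by simp)
  obtain ⟨d₁, d₂, rfl, hd₁, hd₂⟩ := exists_lt_prefix y (w.headD (n + 1)) (by omega) hyd
  rw [show l ++ x :: (c ++ y :: (d₁ ++ d₂) ++ w) = l ++ x :: c ++ y :: (d₁ ++ (d₂ ++ w)) by simp]
    at hσ hy ⊢
  have hyσ := not_mem_of_nodup_append_cons hσ
  simp only [shape, prevLetter_append_cons n hyσ, nextLetter_append_cons n hyσ, Prod.mk.injEq,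
    decide_eq_true_eq, decide_eq_false_iff_not] at hy
  have hyl : y ∉ l ++ c := fun h => hyσ (by simp at h ⊢; tauto)
  have hc : y < c.getLastD x := by simpa only [getLastD_append, List.getLastD_cons] using hy.1
  rw [phi_hop_right hyσ hy.1 hd₁ (by rwa [headD_append]),
    show l ++ x :: c ++ d₁ ++ y :: (d₂ ++ w) = l ++ x :: ((c ++ d₁ ++ y :: d₂) ++ w) by simp,
    phi_hop_right hxl hl (fun a ha => hv a (by simp at ha ⊢; tauto)) hw]
  rw [show l ++ x :: c ++ y :: (d₁ ++ (d₂ ++ w)) = l ++ x :: ((c ++ y :: (d₁ ++ d₂)) ++ w) by simp,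
    phi_hop_right hxl hl hv hw,
    show l ++ (c ++ y :: (d₁ ++ d₂)) ++ x :: w = l ++ c ++ y :: (d₁ ++ (d₂ ++ x :: w)) by simp,
    phi_hop_right hyl ?_ hd₁ ?_]
  · simp
  · rw [getLastD_append]
    exact (iff_getLastD_of_iff (y < ·) c fun _ => by omega).mp hc
  · rw [headD_append, List.headD_cons]
    exact (iff_headD_of_iff (y < ·) d₂ fun _ => by omega).mp hd₂

lemma phi_comm_of_mem_tail (hσ : (l ++ x :: (v ++ w)).Nodup) (hxl : x ∉ l)
    (hl : x < l.getLastD (n + 1)) (hv0 : v ≠ []) (hv : ∀ a ∈ v, a < x)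
    (hw : x < w.headD (n + 1)) (hyw : y ∈ w) (hyn : y ≤ n)
    (hy : shape n (l ++ x :: (v ++ w)) y = (true, false)) :
    phi n x (phi n y (l ++ x :: (v ++ w))) = phi n y (phi n x (l ++ x :: (v ++ w))) := by
  -- with `w = a y b₁ b₂`, where `y` hops over `b₁`, both sides equal `l v x a b₁ y b₂`
  obtain ⟨a, b, rfl, -, hyb⟩ := exists_append_cons_of_mem
    ((List.nodup_middle.mp hσ).of_cons.of_append_right.of_append_right) hyw
  obtain ⟨b₁, b₂, rfl, hb₁, hb₂⟩ := exists_lt_prefix y (n + 1) (by omega) hyb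
  rw [show l ++ x :: (v ++ (a ++ y :: (b₁ ++ b₂))) = l ++ x :: (v ++ a) ++ y :: (b₁ ++ b₂) by simp]
    at hσ hy ⊢
  have hyσ := not_mem_of_nodup_append_cons hσ
  simp only [shape, prevLetter_append_cons n hyσ, nextLetter_append_cons n hyσ, Prod.mk.injEq,
    decide_eq_true_eq, decide_eq_false_iff_not] at hy
  have ha0 : a ≠ [] := by
    rintro rfl
    have := hv _ (getLastD_mem_of_ne_nil hv0 (n + 1))
    simp only [List.nil_append, List.headD_cons] at hw
    simp only [List.append_nil, getLastD_append, List.getLastD_cons,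
      getLastD_congr_of_ne_nil hv0 x (n + 1)] at hy
    omega
  have hyl : y ∉ l ++ v ++ x :: a := fun h => hyσ (by simp at h ⊢; tauto)
  rw [phi_hop_right hyσ hy.1 hb₁ hb₂,
    show l ++ x :: (v ++ a) ++ b₁ ++ y :: b₂ = l ++ x :: (v ++ (a ++ b₁ ++ y :: b₂)) by simp,
    phi_hop_right hxl hl hv ?_]
  rw [show l ++ x :: (v ++ a) ++ y :: (b₁ ++ b₂) = l ++ x :: (v ++ (a ++ y :: (b₁ ++ b₂))) by simp,
    phi_hop_right hxl hl hv hw,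
    show l ++ v ++ x :: (a ++ y :: (b₁ ++ b₂)) = l ++ v ++ x :: a ++ y :: (b₁ ++ b₂) by simp,
    phi_hop_right hyl ?_ hb₁ hb₂]
  · simp
  · simpa only [getLastD_append, List.getLastD_cons, getLastD_congr_of_ne_nil ha0 _ x] using hy.1
  · simpa only [headD_append, headD_congr_of_ne_nil ha0 _ (n + 1)] using hw

lemma phi_comm_of_mem_right {r : List ℕ} (hσ : (l ++ x :: r).Nodup) (hxn : x ≤ n) (hyn : y ≤ n)
    (hyr : y ∈ r) (hx : shape n (l ++ x :: r) x = (true, false))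
    (hy : shape n (l ++ x :: r) y = (true, false)) :
    phi n x (phi n y (l ++ x :: r)) = phi n y (phi n x (l ++ x :: r)) := by
  have hxl := not_mem_of_nodup_append_cons hσ
  have hxr : x ∉ r := (List.nodup_cons.mp (List.nodup_middle.mp hσ)).1 ∘ List.mem_append_right l
  obtain ⟨v, w, rfl, hv, hw⟩ := exists_lt_prefix x (n + 1) (by omega) hxr
  simp only [shape, prevLetter_append_cons n hxl, nextLetter_append_cons n hxl, Prod.mk.injEq,
    decide_eq_true_eq, decide_eq_false_iff_not] at hx
  have hv0 : v ≠ [] := by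
    rintro rfl
    exact hx.2 hw
  rcases List.mem_append.mp hyr with hyv | hyw
  · exact phi_comm_of_mem_block hσ hxl hx.1 hv hw hyv hy
  · exact phi_comm_of_mem_tail hσ hxl hx.1 hv0 hv hw hyw hyn hy

lemma phi_comm {σ : List ℕ} (hσ : σ.Perm (List.range' 1 n)) (hx : x ∈ doubleDescents n σ)
    (hy : y ∈ doubleDescents n σ) : phi n x (phi n y σ) = phi n y (phi n x σ) := by
  obtain ⟨hxI, hx'⟩ := mem_doubleDescents.mp hx
  obtain ⟨hyI, hy'⟩ := mem_doubleDescents.mp hy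
  have hxn := (Finset.mem_Icc.mp hxI).2
  have hyn := (Finset.mem_Icc.mp hyI).2
  have hxσ := (mem_iff_mem_Icc hσ).mpr hxI
  have hyσ := (mem_iff_mem_Icc hσ).mpr hyI
  replace hσ := nodup_of_perm_range' hσ
  rcases eq_or_ne y x with rfl | hyx
  · rfl
  obtain ⟨l, r, rfl, -, -⟩ := exists_append_cons_of_mem hσ hxσ
  rcases List.mem_append.mp hyσ with hyl | hyr
  · obtain ⟨a, b, rfl, -, -⟩ := exists_append_cons_of_mem (List.Nodup.of_append_left hσ) hyl
    rw [show a ++ y :: b ++ x :: r = a ++ y :: (b ++ x :: r) by simp] at hσ hx' hy' ⊢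
    exact (phi_comm_of_mem_right hσ hyn hxn (by simp) hy' hx').symm
  · rcases List.mem_cons.mp hyr with rfl | hyr
    · exact absurd rfl hyx
    · exact phi_comm_of_mem_right hσ hxn hyn hyr hx' hy'

end Commute

section Canonical

variable {n x : ℕ} {σ τ : List ℕ}

/-- The word obtained from `σ` by turning all its double descents into double ascents. -/
noncomputable def canonical (n : ℕ) (σ : List ℕ) : List ℕ :=
  if h : σ.Perm (List.range' 1 n) ∧ (doubleDescents n σ).Nonempty then
    canonical n (phi n ((doubleDescents n σ).min' h.2) σ)
  else σ
termination_by (doubleDescents n σ).card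
decreasing_by
  rw [doubleDescents_phi h.1 ((doubleDescents n σ).min'_mem h.2)]
  exact Finset.card_erase_lt_of_mem ((doubleDescents n σ).min'_mem h.2)

lemma canonical_of_eq_empty (h : doubleDescents n σ = ∅) : canonical n σ = σ := by
  rw [canonical, dif_neg (by simp [h])]

lemma canonical_of_nonempty (hσ : σ.Perm (List.range' 1 n)) (h : (doubleDescents n σ).Nonempty) :
    canonical n σ = canonical n (phi n ((doubleDescents n σ).min' h) σ) := by
  rw [canonical, dif_pos ⟨hσ, h⟩]

lemma canonical_phi_of_mem_doubleDescents (hσ : σ.Perm (List.range' 1 n))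
    (hx : x ∈ doubleDescents n σ) : canonical n (phi n x σ) = canonical n σ := by
  induction hk : (doubleDescents n σ).card using Nat.strong_induction_on generalizing σ x with
  | _ k ih =>
  have hne : (doubleDescents n σ).Nonempty := ⟨x, hx⟩
  set m := (doubleDescents n σ).min' hne
  have hm : m ∈ doubleDescents n σ := Finset.min'_mem _ hne
  rcases eq_or_ne x m with rfl | hxm
  · exact (canonical_of_nonempty hσ hne).symm
  have hmx : m ∈ doubleDescents n (phi n x σ) := by
    rw [doubleDescents_phi hσ hx]
    exact Finset.mem_erase.mpr ⟨hxm.symm, hm⟩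
  have hxm' : x ∈ doubleDescents n (phi n m σ) := by
    rw [doubleDescents_phi hσ hm]
    exact Finset.mem_erase.mpr ⟨hxm, hx⟩
  have hcard {z : ℕ} (hz : z ∈ doubleDescents n σ) : (doubleDescents n (phi n z σ)).card < k := by
    rw [doubleDescents_phi hσ hz, ← hk]
    exact Finset.card_erase_lt_of_mem hz
  have hxσ := (mem_doubleDescents.mp hx).1
  have hmσ := (mem_doubleDescents.mp hm).1
  calc canonical n (phi n x σ)
      = canonical n (phi n m (phi n x σ)) :=
        (ih _ (hcard hx) (perm_range'_phi hσ hxσ) hmx rfl).symm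
    _ = canonical n (phi n x (phi n m σ)) := by rw [phi_comm hσ hx hm]
    _ = canonical n (phi n m σ) := ih _ (hcard hm) (perm_range'_phi hσ hmσ) hxm' rfl
    _ = canonical n σ := (canonical_of_nonempty hσ hne).symm

lemma canonical_phi (hσ : σ.Perm (List.range' 1 n)) (hx : x ∈ Finset.Icc 1 n) :
    canonical n (phi n x σ) = canonical n σ := by
  rcases h : shape n σ x with ⟨_ | _, _ | _⟩
  · rw [phi_eq_self (by rw [h])]
  · have hop := isHop_phi_symm hσ hx h
    conv_rhs => rw [← hop.phi_eq]
    exact (canonical_phi_of_mem_doubleDescents (perm_range'_phi hσ hx)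
      (mem_doubleDescents.mpr ⟨hx, hop.shape_left⟩)).symm
  · exact canonical_phi_of_mem_doubleDescents hσ (mem_doubleDescents.mpr ⟨hx, h⟩)
  · rw [phi_eq_self (by rw [h])]

lemma eq_of_canonical_eq (hσ : σ.Perm (List.range' 1 n)) (hτ : τ.Perm (List.range' 1 n))
    (hc : canonical n σ = canonical n τ) (hd : doubleDescents n σ = doubleDescents n τ) :
    σ = τ := by
  induction hk : (doubleDescents n σ).card using Nat.strong_induction_on generalizing σ τ with
  | _ k ih =>
  rcases (doubleDescents n σ).eq_empty_or_nonempty with he | ⟨m, hm⟩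
  · rwa [canonical_of_eq_empty he, canonical_of_eq_empty (hd ▸ he)] at hc
  have hmτ : m ∈ doubleDescents n τ := hd ▸ hm
  have hmI := (mem_doubleDescents.mp hm).1
  have key : phi n m σ = phi n m τ := by
    refine ih _ ?_ (perm_range'_phi hσ hmI) (perm_range'_phi hτ hmI) ?_ ?_ rfl
    · rw [doubleDescents_phi hσ hm, ← hk]
      exact Finset.card_erase_lt_of_mem hm
    · rw [canonical_phi hσ hmI, canonical_phi hτ hmI, hc]
    · rw [doubleDescents_phi hσ hm, doubleDescents_phi hτ hmτ, hd]
  rw [← phi_phi hσ hmI, key, phi_phi hτ hmI]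

lemma doubleDescents_canonical (hσ : σ.Perm (List.range' 1 n)) :
    doubleDescents n (canonical n σ) = ∅ := by
  induction hk : (doubleDescents n σ).card using Nat.strong_induction_on generalizing σ with
  | _ k ih =>
  rcases (doubleDescents n σ).eq_empty_or_nonempty with he | hne
  · rwa [canonical_of_eq_empty he]
  have hm := Finset.min'_mem _ hne
  rw [canonical_of_nonempty hσ hne]
  refine ih _ ?_ (perm_range'_phi hσ (mem_doubleDescents.mp hm).1) rfl
  rw [doubleDescents_phi hσ hm, ← hk]
  exact Finset.card_erase_lt_of_mem hm

end Canonical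

section Orbit

variable {n : ℕ} {w σ : List ℕ}

lemma mem_Orb_self : w ∈ Orb n w := ⟨[], by simp, rfl⟩

lemma phi_mem_Orb {x : ℕ} (hx : x ∈ Finset.Icc 1 n) (hσ : σ ∈ Orb n w) : phi n x σ ∈ Orb n w := by
  obtain ⟨l, hl, rfl⟩ := hσ
  exact ⟨x :: l, List.forall_mem_cons.mpr ⟨hx, hl⟩, rfl⟩

lemma Orb.induction_on {P : List ℕ → Prop} (h₀ : P w)
    (step : ∀ σ ∈ Orb n w, ∀ x ∈ Finset.Icc 1 n, P σ → P (phi n x σ)) (hσ : σ ∈ Orb n w) :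
    P σ := by
  obtain ⟨l, hl, rfl⟩ := hσ
  induction l with
  | nil => exact h₀
  | cons x l ih =>
    rw [List.forall_mem_cons] at hl
    exact step _ ⟨l, hl.2, rfl⟩ x hl.1 (ih hl.2)

lemma perm_range'_of_mem_Orb (hw : w.Perm (List.range' 1 n)) (hσ : σ ∈ Orb n w) :
    σ.Perm (List.range' 1 n) :=
  Orb.induction_on (P := (·.Perm _)) hw (fun _ _ _ hx hτ => perm_range'_phi hτ hx) hσ

lemma lettersWithShape_of_mem_Orb (hw : w.Perm (List.range' 1 n)) (hσ : σ ∈ Orb n w)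
    {P : Bool × Bool → Prop} [DecidablePred P] (hP : ∀ t, P t.swap ↔ P t) :
    lettersWithShape n σ P = lettersWithShape n w P :=
  Orb.induction_on (P := (lettersWithShape n · P = _)) rfl
    (fun _ hτ _ hx h => (lettersWithShape_phi (perm_range'_of_mem_Orb hw hτ) hx hP).trans h) hσ

lemma canonical_of_mem_Orb (hw : w.Perm (List.range' 1 n)) (hσ : σ ∈ Orb n w) :
    canonical n σ = canonical n w :=
  Orb.induction_on (P := (canonical n · = _)) rfl
    (fun _ hτ _ hx h => (canonical_phi (perm_range'_of_mem_Orb hw hτ) hx).trans h) hσ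

lemma peaks_of_mem_Orb (hw : w.Perm (List.range' 1 n)) (hσ : σ ∈ Orb n w) :
    peaks n σ = peaks n w :=
  lettersWithShape_of_mem_Orb hw hσ fun t => by rcases t with ⟨_ | _, _ | _⟩ <;> decide

lemma freeLetters_of_mem_Orb (hw : w.Perm (List.range' 1 n)) (hσ : σ ∈ Orb n w) :
    freeLetters n σ = freeLetters n w :=
  lettersWithShape_of_mem_Orb hw hσ fun _ => ne_comm

lemma canonical_mem_Orb (hw : w.Perm (List.range' 1 n)) (hσ : σ ∈ Orb n w) :
    canonical n σ ∈ Orb n w := by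
  induction hk : (doubleDescents n σ).card using Nat.strong_induction_on generalizing σ with
  | _ k ih =>
  rcases (doubleDescents n σ).eq_empty_or_nonempty with he | hne
  · rwa [canonical_of_eq_empty he]
  have hσw := perm_range'_of_mem_Orb hw hσ
  have hm := Finset.min'_mem _ hne
  rw [canonical_of_nonempty hσw hne]
  refine ih _ ?_ (phi_mem_Orb (mem_doubleDescents.mp hm).1 hσ) rfl
  rw [doubleDescents_phi hσw hm, ← hk]
  exact Finset.card_erase_lt_of_mem hm

lemma exists_mem_Orb_doubleDescents_eq (hw : w.Perm (List.range' 1 n)) {S : Finset ℕ}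
    (hS : S ⊆ freeLetters n w) : ∃ σ ∈ Orb n w, doubleDescents n σ = S := by
  induction S using Finset.induction_on with
  | empty =>
    exact ⟨canonical n w, canonical_mem_Orb hw mem_Orb_self, doubleDescents_canonical hw⟩
  | insert a S haS ih =>
    obtain ⟨σ, hσ, hσS⟩ := ih ((Finset.subset_insert a S).trans hS)
    have hσw := perm_range'_of_mem_Orb hw hσ
    have ha : a ∈ freeLetters n σ := by
      rw [freeLetters_of_mem_Orb hw hσ]
      exact hS (Finset.mem_insert_self a S)
    have ha' : a ∉ doubleDescents n σ := hσS ▸ haS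
    simp only [lettersWithShape, Finset.mem_filter, not_and] at ha ha'
    have hshape : shape n σ a = (false, true) :=
      (by decide : ∀ t : Bool × Bool, t.1 ≠ t.2 → t ≠ (true, false) → t = (false, true))
        _ ha.2 (ha' ha.1)
    refine ⟨phi n a σ, phi_mem_Orb ha.1 hσ, ?_⟩
    rw [doubleDescents_phi_of_shape_eq hσw ha.1 hshape, hσS]

open Classical in
lemma sum_Orb_eq_sum_powerset {M : Type*} [AddCommMonoid M] (hw : w.Perm (List.range' 1 n))
    (f : Finset ℕ → M) :
    ∑ σ ∈ (List.range' 1 n).permutations.toFinset.filter (fun σ => σ ∈ Orb n w),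
        f (doubleDescents n σ) = ∑ S ∈ (freeLetters n w).powerset, f S := by
  have hmem : ∀ σ, σ ∈ (List.range' 1 n).permutations.toFinset.filter (fun σ => σ ∈ Orb n w) ↔
      σ ∈ Orb n w := fun σ => by
    simp only [Finset.mem_filter, List.mem_toFinset, List.mem_permutations, and_iff_right_iff_imp]
    exact perm_range'_of_mem_Orb hw
  refine Finset.sum_nbij (doubleDescents n) (fun σ hσ => ?_) (fun σ hσ τ hτ h => ?_)
    (fun S hS => ?_) fun _ _ => rfl
  · rw [hmem] at hσ
    rw [Finset.mem_powerset, ← freeLetters_of_mem_Orb hw hσ]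
    exact doubleDescents_subset_freeLetters
  · rw [Finset.mem_coe, hmem] at hσ hτ
    exact eq_of_canonical_eq (perm_range'_of_mem_Orb hw hσ) (perm_range'_of_mem_Orb hw hτ)
      ((canonical_of_mem_Orb hw hσ).trans (canonical_of_mem_Orb hw hτ).symm) h
  · obtain ⟨σ, hσ, rfl⟩ := exists_mem_Orb_doubleDescents_eq hw (Finset.mem_powerset.mp hS)
    exact ⟨σ, by rw [Finset.mem_coe, hmem]; exact hσ, rfl⟩

end Orbit

section Counting

variable {n : ℕ} {σ : List ℕ}

lemma ext_add_one {k : ℕ} (hk : k < σ.length) : ext n σ (k + 1) = σ[k] := by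
  simp [ext, List.getD_eq_getElem?_getD, List.getElem?_append_left hk, hk]

lemma ext_length_add_one : ext n σ (σ.length + 1) = n + 1 := by
  simp [ext, List.getD_eq_getElem?_getD]

lemma append_cons_getElem {k : ℕ} (hk : k < σ.length) : σ = σ.take k ++ σ[k] :: σ.drop (k + 1) := by
  rw [← List.drop_eq_getElem_cons hk, List.take_append_drop]

lemma prevLetter_getElem (hσ : σ.Nodup) {k : ℕ} (hk : k < σ.length) :
    prevLetter n σ σ[k] = ext n σ k := by
  have h := append_cons_getElem hk
  have hnot := not_mem_of_nodup_append_cons (h ▸ hσ)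
  generalize σ[k] = a at h hnot
  conv_lhs => rw [h, prevLetter_append_cons n hnot]
  rcases k with _ | j
  · rfl
  · rw [ext_add_one (by omega)]
    simp [List.getLast?_take, show j < σ.length by omega]

lemma nextLetter_getElem (hσ : σ.Nodup) {k : ℕ} (hk : k < σ.length) :
    nextLetter n σ σ[k] = ext n σ (k + 2) := by
  have h := append_cons_getElem hk
  have hnot := not_mem_of_nodup_append_cons (h ▸ hσ)
  generalize σ[k] = a at h hnot
  conv_lhs => rw [h, nextLetter_append_cons n hnot]
  rcases Nat.lt_or_ge (k + 1) σ.length with hk' | hk'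
  · rw [ext_add_one hk']
    simp [hk']
  · rw [show k + 2 = σ.length + 1 by omega, ext_length_add_one, List.drop_of_length_le hk']
    rfl

lemma card_filter_positions (hσ : σ.Perm (List.range' 1 n)) (P : ℕ → ℕ → ℕ → Prop)
    [∀ a b c, Decidable (P a b c)] :
    ((Finset.Icc 1 n).filter fun i => P (ext n σ (i - 1)) (ext n σ i) (ext n σ (i + 1))).card =
      ((Finset.Icc 1 n).filter fun y => P (prevLetter n σ y) y (nextLetter n σ y)).card := by
  have hσ' := nodup_of_perm_range' hσ
  have hlen : σ.length = n := by simpa using hσ.length_eq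
  refine Finset.card_bij (fun i _ => ext n σ i) (fun i hi => ?_) (fun i hi j hj hij => ?_)
    (fun y hy => ?_)
  · obtain ⟨hi, hP⟩ := Finset.mem_filter.mp hi
    obtain ⟨k, rfl⟩ : ∃ k, i = k + 1 := ⟨i - 1, by simp at hi; omega⟩
    have hk : k < σ.length := by simp at hi; omega
    rw [ext_add_one hk, Finset.mem_filter, ← mem_iff_mem_Icc hσ, prevLetter_getElem hσ' hk,
      nextLetter_getElem hσ' hk]
    exact ⟨List.getElem_mem hk, by simpa [ext_add_one hk] using hP⟩
  · simp only [Finset.mem_filter, Finset.mem_Icc] at hi hj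
    obtain ⟨k, rfl⟩ : ∃ k, i = k + 1 := ⟨i - 1, by omega⟩
    obtain ⟨l, rfl⟩ : ∃ l, j = l + 1 := ⟨j - 1, by omega⟩
    rw [ext_add_one (by omega), ext_add_one (by omega), hσ'.getElem_inj_iff] at hij
    rw [hij]
  · obtain ⟨hy, hP⟩ := Finset.mem_filter.mp hy
    obtain ⟨k, hk, rfl⟩ := List.mem_iff_getElem.mp ((mem_iff_mem_Icc hσ).mpr hy)
    refine ⟨k + 1, Finset.mem_filter.mpr ⟨Finset.mem_Icc.mpr ⟨by omega, by omega⟩, ?_⟩,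
      ext_add_one hk⟩
    rw [prevLetter_getElem hσ' hk, nextLetter_getElem hσ' hk] at hP
    simpa [ext_add_one hk] using hP

lemma card_filter_Icc_sub_one_add (Q : ℕ → Prop) [DecidablePred Q] :
    ((Finset.Icc 1 n).filter fun i => Q (i - 1)).card + (if Q n then 1 else 0) =
      ((Finset.Icc 1 n).filter Q).card + (if Q 0 then 1 else 0) := by
  rw [Finset.card_filter, Finset.card_filter]
  induction n with
  | zero => simp
  | succ m ih =>
    rw [Finset.sum_Icc_succ_top (by omega), Finset.sum_Icc_succ_top (by omega), Nat.add_sub_cancel]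
    omega

lemma card_lettersWithShape (P : Bool × Bool → Prop) [DecidablePred P] :
    (lettersWithShape n σ P).card =
      ∑ t : Bool × Bool, if P t then (lettersWithShape n σ (· = t)).card else 0 := by
  rw [Finset.card_eq_sum_card_fiberwise (f := shape n σ) (t := Finset.univ.filter P)
    (fun y hy => by simpa [lettersWithShape] using (Finset.mem_filter.mp hy).2), Finset.sum_filter]
  refine Finset.sum_congr rfl fun t _ => if_ctx_congr Iff.rfl (fun hP => ?_) fun _ => rfl
  simp only [lettersWithShape, Finset.filter_filter]
  congr 2 with y
  exact ⟨And.right, fun h => ⟨h ▸ hP, h⟩⟩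

lemma prevLetter_ne (hσ : σ.Perm (List.range' 1 n)) {y : ℕ} (hy : y ∈ Finset.Icc 1 n) :
    prevLetter n σ y ≠ y := by
  obtain ⟨u, v, rfl, hu, -⟩ :=
    exists_append_cons_of_mem (nodup_of_perm_range' hσ) ((mem_iff_mem_Icc hσ).mpr hy)
  rw [prevLetter_append_cons n hu]
  rcases eq_or_ne u [] with rfl | hu0
  · simp only [List.getLastD_nil]
    exact ne_of_gt (Nat.lt_succ_of_le (Finset.mem_Icc.mp hy).2)
  · exact fun h => hu (h ▸ getLastD_mem_of_ne_nil hu0 _)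

lemma nextLetter_ne (hσ : σ.Perm (List.range' 1 n)) {y : ℕ} (hy : y ∈ Finset.Icc 1 n) :
    nextLetter n σ y ≠ y := by
  obtain ⟨u, v, rfl, hu, hv⟩ :=
    exists_append_cons_of_mem (nodup_of_perm_range' hσ) ((mem_iff_mem_Icc hσ).mpr hy)
  rw [nextLetter_append_cons n hu]
  rcases eq_or_ne v [] with rfl | hv0
  · simp only [List.headD_nil]
    exact ne_of_gt (Nat.lt_succ_of_le (Finset.mem_Icc.mp hy).2)
  · exact fun h => hv (h ▸ headD_mem_of_ne_nil hv0 _)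

lemma des_eq_card_lettersWithShape (hσ : σ.Perm (List.range' 1 n)) :
    des n σ = (lettersWithShape n σ (·.2 = false)).card := by
  rw [des, card_filter_positions hσ fun _ b c => c < b, lettersWithShape]
  congr 1
  refine Finset.filter_congr fun y hy => ?_
  have := nextLetter_ne hσ hy
  simp only [shape, decide_eq_false_iff_not]
  omega

lemma des_eq (hσ : σ.Perm (List.range' 1 n)) :
    des n σ = (peaks n σ).card + (doubleDescents n σ).card := by
  rw [des_eq_card_lettersWithShape hσ, card_lettersWithShape, add_comm]
  simp [Fintype.sum_prod_type]

/-- A letter has a higher left neighbour iff it follows a descent `aᵢ > aᵢ₊₁` with `1 ≤ i < n`,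
or it is `a₁` (as `a₀ = n + 1`); and `i = n` is never a descent (as `aₙ₊₁ = n + 1`). -/
lemma card_lettersWithShape_fst_eq_true (hσ : σ.Perm (List.range' 1 n)) (hn : 0 < n) :
    (lettersWithShape n σ (·.1 = true)).card = des n σ + 1 := by
  have hlen : σ.length = n := by simpa using hσ.length_eq
  have hle : ∀ k < n, ext n σ (k + 1) ≤ n := fun k hk => by
    rw [ext_add_one (hlen ▸ hk)]
    exact (Finset.mem_Icc.mp ((mem_iff_mem_Icc hσ).mp (List.getElem_mem _))).2
  have hfirst : ext n σ 1 < ext n σ 0 := Nat.lt_succ_of_le (hle 0 hn)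
  have hlast : ¬ ext n σ (n + 1) < ext n σ n := by
    have h₁ : ext n σ (n + 1) = n + 1 := by
      have := ext_length_add_one (n := n) (σ := σ)
      rwa [hlen] at this
    have h₂ := hle (n - 1) (by omega)
    rw [Nat.sub_add_cancel hn] at h₂
    omega
  have h := card_filter_Icc_sub_one_add (n := n) fun j => ext n σ (j + 1) < ext n σ j
  rw [if_neg hlast, if_pos hfirst, add_zero] at h
  have hprev : lettersWithShape n σ (·.1 = true) =
      (Finset.Icc 1 n).filter fun y => y < prevLetter n σ y := by
    simp [lettersWithShape, shape]
  rw [des, ← h, hprev, ← card_filter_positions hσ fun a b _ => b < a]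
  congr 1
  refine Finset.filter_congr fun i hi => ?_
  rw [Nat.sub_add_cancel (Finset.mem_Icc.mp hi).1]

lemma peak_eq (hσ : σ.Perm (List.range' 1 n)) : peak n σ = (peaks n σ).card := by
  rw [peak, card_filter_positions hσ fun a b c => a < b ∧ c < b, peaks, lettersWithShape]
  congr 1
  refine Finset.filter_congr fun y hy => ?_
  have := prevLetter_ne hσ hy
  have := nextLetter_ne hσ hy
  simp only [shape, Prod.mk.injEq, decide_eq_false_iff_not]
  omega

lemma card_freeLetters (hσ : σ.Perm (List.range' 1 n)) :
    (freeLetters n σ).card = n - 1 - 2 * (peaks n σ).card := by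
  rcases Nat.eq_zero_or_pos n with rfl | hn
  · simp [lettersWithShape]
  have h₁ := card_lettersWithShape_fst_eq_true hσ hn
  have h₂ := des_eq_card_lettersWithShape hσ
  have h₃ : n = (lettersWithShape n σ fun _ => True).card := by simp [lettersWithShape]
  change _ = n - 1 - 2 * (lettersWithShape n σ (· = (false, false))).card
  rw [card_lettersWithShape] at h₁ h₂ h₃ ⊢
  simp only [Fintype.sum_prod_type, Fintype.sum_bool, ne_eq, reduceCtorEq, not_false_eq_true,
    not_true_eq_false, ↓reduceIte] at h₁ h₂ h₃ ⊢
  omega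

end Counting

end FoataStrehl

open FoataStrehl

open Classical in
theorem foata_strehl_orbit_descent_polynomial
    (n : ℕ) (w : List ℕ) (hw : w.Perm (List.range' 1 n)) (x : ℝ) :
    ∑ σ ∈ (List.range' 1 n).permutations.toFinset.filter (fun σ => σ ∈ Orb n w),
        x ^ des n σ =
      x ^ peak n w * (1 + x) ^ (n - 1 - 2 * peak n w) := by
  calc ∑ σ ∈ (List.range' 1 n).permutations.toFinset.filter (fun σ => σ ∈ Orb n w),
          x ^ des n σ
      = ∑ σ ∈ (List.range' 1 n).permutations.toFinset.filter (fun σ => σ ∈ Orb n w),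
          x ^ ((peaks n w).card + (doubleDescents n σ).card) := by
        refine Finset.sum_congr rfl fun σ hσ => ?_
        have hσ := (Finset.mem_filter.mp hσ).2
        rw [des_eq (perm_range'_of_mem_Orb hw hσ), peaks_of_mem_Orb hw hσ]
    _ = ∑ S ∈ (freeLetters n w).powerset, x ^ ((peaks n w).card + S.card) :=
        sum_Orb_eq_sum_powerset hw fun S => x ^ ((peaks n w).card + S.card)
    _ = x ^ (peaks n w).card * (1 + x) ^ (freeLetters n w).card := by
        simp_rw [pow_add, ← Finset.mul_sum, add_comm (1 : ℝ)]
        congr 1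
        simpa using Finset.sum_pow_mul_eq_add_pow x 1 (freeLetters n w)
    _ = x ^ peak n w * (1 + x) ^ (n - 1 - 2 * peak n w) := by
        rw [peak_eq hw, card_freeLetters hw]
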